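/- Let α ∈ [0,1] be a real number, let p be a prime, z a positive integer, and n = p^z with n ≥ 3. Let D_{2n} = ⟨a, b | a^n = b² = e, bab = a^{−1}⟩ be the dihedral group of order 2n. Then αn − 1 is an eigenvalue of A_α(P(D_{2n})) whose eigenspace has dimension at least n − 2, and α is an eigenvalue of A_α(P(D_{2n})) whose eigenspace has dimension at least n − 1. -/

import Mathlib

open Matrix Polynomial BigOperators

/-- The generalized adjacency matrix `A_α(G) = α·D(G) + (1−α)·A(G)`. -/
noncomputable def Aalpha {V : Type*} [Fintype V] (G : SimpleGraph V) (α : ℝ) :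
    Matrix V V ℝ :=
  letI := Classical.decEq V
  letI := Classical.decRel G.Adj
  α • Matrix.diagonal (fun v => (G.degree v : ℝ)) + (1 - α) • G.adjMatrix ℝ

/-- `μ` is an eigenvalue of the real matrix `M`. -/
def Matrix.IsEigenvalue {n : Type*} [Fintype n] (M : Matrix n n ℝ) (μ : ℝ) : Prop :=
  ∃ v : n → ℝ, v ≠ 0 ∧ M.mulVec v = μ • v

/-- The dimension of the eigenspace of a real matrix `M` for the value `μ`. -/
noncomputable def eigMult {n : Type*} [Fintype n] (M : Matrix n n ℝ) (μ : ℝ) : ℕ :=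
  letI := Classical.decEq n
  Module.finrank ℝ (Module.End.eigenspace (Matrix.toLin' M) μ)

/-- The joined union `G[G_1, …, G_n]`. -/
def joinedUnion {n : ℕ} (G : SimpleGraph (Fin n)) (V : Fin n → Type*)
    (Gs : ∀ i, SimpleGraph (V i)) : SimpleGraph (Σ i, V i) :=
  SimpleGraph.fromRel (fun x y =>
    if h : x.1 = y.1 then (Gs y.1).Adj (h ▸ x.2) y.2 else G.Adj x.1 y.1)

/-- The join `G ∇ H` of two graphs. -/
def graphJoin {V W : Type*} (G : SimpleGraph V) (H : SimpleGraph W) :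
    SimpleGraph (V ⊕ W) :=
  SimpleGraph.fromRel (fun x y =>
    match x, y with
    | Sum.inl a, Sum.inl b => G.Adj a b
    | Sum.inr a, Sum.inr b => H.Adj a b
    | _, _ => True)

/-- The disjoint union `G ∪ H` of two graphs. -/
def disjUnion {V W : Type*} (G : SimpleGraph V) (H : SimpleGraph W) :
    SimpleGraph (V ⊕ W) :=
  SimpleGraph.fromRel (fun x y =>
    match x, y with
    | Sum.inl a, Sum.inl b => G.Adj a b
    | Sum.inr a, Sum.inr b => H.Adj a b
    | _, _ => False)

/-- Degree of a vertex (classical version). -/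
noncomputable def gdegree {V : Type*} [Fintype V] (G : SimpleGraph V) (v : V) : ℕ :=
  letI := Classical.decEq V
  letI := Classical.decRel G.Adj
  G.degree v

/-- The power graph of a group. -/
def powerGraph (G : Type*) [Group G] : SimpleGraph G :=
  SimpleGraph.fromRel (fun x y => ∃ k : ℕ, 0 < k ∧ y = x ^ k)

/-!
For `n = p ^ z` the subgroups of `ZMod n` form a chain, so any two distinct rotations of `D_{2n}`
are adjacent in the power graph, while a reflection is adjacent only to the identity. Hence any
two nontrivial rotations are adjacent twins of degree `n - 1`, and any two reflections are
non-adjacent twins of degree `1`. For twins `u, v` the vector `e_u - e_v` is an eigenvector of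
`A_α` with eigenvalue `α · deg u - (1 - α) · [u ∼ v]`; fixing one twin and letting the other vary
gives `n - 2`, resp. `n - 1`, linearly independent eigenvectors.
-/

open Finset

section Aalpha

variable {V : Type*} [Fintype V] [DecidableEq V] (G : SimpleGraph V) [DecidableRel G.Adj] (α : ℝ)

theorem Aalpha_eq :
    Aalpha G α = α • diagonal (fun v => (G.degree v : ℝ)) + (1 - α) • G.adjMatrix ℝ := by
  unfold Aalpha
  congr!

theorem Aalpha_mulVec_single_sub_single {u v : V} (hdeg : G.degree u = G.degree v)
    (htwin : ∀ w, w ≠ u → w ≠ v → (G.Adj w u ↔ G.Adj w v)) :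
    Aalpha G α *ᵥ (Pi.single u 1 - Pi.single v 1) =
      (α * G.degree u - (1 - α) * G.adjMatrix ℝ u v) • (Pi.single u 1 - Pi.single v 1) := by
  ext w
  simp only [Aalpha_eq, mulVec_sub, mulVec_single_one]
  by_cases hwu : w = u
  · subst hwu
    by_cases hwv : w = v
    · simp [hwv]
    · simp [hwv, G.adj_comm w v]
  · by_cases hwv : w = v
    · subst hwv
      simp [hwu, hdeg, G.adj_comm w u]
    · simp [hwu, hwv, htwin w hwu hwv]

end Aalpha

theorem card_le_eigMult_of_linearIndependent {n ι : Type*} [Fintype n] [Fintype ι]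
    (M : Matrix n n ℝ) (μ : ℝ) {f : ι → n → ℝ} (hf : LinearIndependent ℝ f)
    (hM : ∀ i, M *ᵥ f i = μ • f i) : Fintype.card ι ≤ eigMult M μ := by
  classical
  have hmem : ∀ i, f i ∈ Module.End.eigenspace (toLin' M) μ := fun i =>
    Module.End.mem_eigenspace_iff.2 (by rw [toLin'_apply]; exact hM i)
  have hf' : LinearIndependent ℝ fun i => (⟨f i, hmem i⟩ : Module.End.eigenspace (toLin' M) μ) :=
    .of_comp (Submodule.subtype _) hf
  exact hf'.fintype_card_le_finrank

theorem linearIndependent_single_sub_single {R V : Type*} [Ring R] [DecidableEq V]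
    {s : Finset V} {b : V} (hb : b ∉ s) :
    LinearIndependent R (fun v : s => (Pi.single (v : V) 1 - Pi.single b 1 : V → R)) := by
  rw [Fintype.linearIndependent_iff]
  intro g hg v
  simpa [Finset.sum_apply, Pi.single_apply, ne_of_mem_of_not_mem v.2 hb] using congrFun hg v

theorem card_le_eigMult_of_mulVec_single_sub_single {V : Type*} [Fintype V] [DecidableEq V]
    (M : Matrix V V ℝ) (μ : ℝ) {s : Finset V} {b : V} (hb : b ∉ s)
    (hM : ∀ v ∈ s, M *ᵥ (Pi.single v 1 - Pi.single b 1) = μ • (Pi.single v 1 - Pi.single b 1)) :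
    #s ≤ eigMult M μ := by
  simpa using card_le_eigMult_of_linearIndependent M μ
    (linearIndependent_single_sub_single hb) (fun v => hM v v.2)

theorem ZMod.dvd_of_gcd_val_dvd_val {n : ℕ} [NeZero n] {i j : ZMod n}
    (h : i.val.gcd n ∣ j.val) : i ∣ j := by
  obtain ⟨m, hm⟩ := h
  refine ⟨i⁻¹ * m, ?_⟩
  rw [← mul_assoc, ZMod.mul_inv_eq_gcd, ← Nat.cast_mul, ← hm, ZMod.natCast_zmod_val]

theorem ZMod.dvd_or_dvd_of_prime_pow {p z : ℕ} (hp : p.Prime) (i j : ZMod (p ^ z)) :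
    i ∣ j ∨ j ∣ i := by
  have : NeZero (p ^ z) := ⟨pow_ne_zero z hp.ne_zero⟩
  obtain ⟨s, -, hs⟩ := (Nat.dvd_prime_pow hp).mp (Nat.gcd_dvd_right i.val (p ^ z))
  obtain ⟨t, -, ht⟩ := (Nat.dvd_prime_pow hp).mp (Nat.gcd_dvd_right j.val (p ^ z))
  wlog hst : s ≤ t generalizing i j s t
  · exact (this j i t ht s hs (le_of_not_ge hst)).symm
  refine .inl (ZMod.dvd_of_gcd_val_dvd_val ?_)
  calc i.val.gcd (p ^ z) = p ^ s := hs
    _ ∣ p ^ t := pow_dvd_pow p hst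
    _ = j.val.gcd (p ^ z) := ht.symm
    _ ∣ j.val := Nat.gcd_dvd_left _ _

namespace DihedralGroup

variable {n : ℕ}

@[simp]
theorem r_eq_one_iff {i : ZMod n} : r i = 1 ↔ i = 0 := by
  rw [one_def, r.injEq]

@[simp]
theorem sr_ne_one (i : ZMod n) : sr i ≠ 1 := by
  simp [one_def, -r_zero]

theorem sr_pow_eq_one_or_eq_sr (i : ZMod n) (k : ℕ) : sr i ^ k = 1 ∨ sr i ^ k = sr i := by
  induction k with
  | zero => exact .inl (pow_zero _)
  | succ k ih => rcases ih with h | h <;> simp [pow_succ, h]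

theorem powerGraph_adj_sr_iff (x : DihedralGroup n) (i : ZMod n) :
    (powerGraph (DihedralGroup n)).Adj x (sr i) ↔ x = 1 := by
  simp only [powerGraph, SimpleGraph.fromRel_adj]
  constructor
  · rintro ⟨hne, ⟨k, -, hk⟩ | ⟨k, -, hk⟩⟩
    · cases x with
      | r j => simp [r_pow] at hk
      | sr j => rcases sr_pow_eq_one_or_eq_sr j k with h | h <;> simp_all
    · rcases sr_pow_eq_one_or_eq_sr i k with h | h <;> simp_all
  · rintro rfl
    exact ⟨(sr_ne_one i).symm, .inr ⟨2, two_pos, by simp [pow_two]⟩⟩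

theorem exists_pos_pow_r_eq_r_iff [NeZero n] (i j : ZMod n) :
    (∃ k : ℕ, 0 < k ∧ r j = r i ^ k) ↔ i ∣ j := by
  simp only [r_pow, r.injEq]
  constructor
  · rintro ⟨k, -, rfl⟩
    exact dvd_mul_right i _
  · rintro ⟨c, rfl⟩
    refine ⟨c.val + n, by have := NeZero.pos n; omega, ?_⟩
    simp

theorem powerGraph_adj_r_r_iff {p z : ℕ} (hp : p.Prime) (i j : ZMod (p ^ z)) :
    (powerGraph (DihedralGroup (p ^ z))).Adj (r i) (r j) ↔ i ≠ j := by
  have : NeZero (p ^ z) := ⟨pow_ne_zero z hp.ne_zero⟩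
  simp only [powerGraph, SimpleGraph.fromRel_adj, ne_eq, r.injEq, exists_pos_pow_r_eq_r_iff]
  have := ZMod.dvd_or_dvd_of_prime_pow hp i j
  tauto

theorem powerGraph_degree_sr (i : ZMod n)
    [Fintype ((powerGraph (DihedralGroup n)).neighborSet (sr i))] :
    (powerGraph (DihedralGroup n)).degree (sr i) = 1 := by
  rw [← SimpleGraph.card_neighborFinset_eq_degree, Finset.card_eq_one]
  refine ⟨1, Finset.ext fun x => ?_⟩
  rw [SimpleGraph.mem_neighborFinset, SimpleGraph.adj_comm, powerGraph_adj_sr_iff,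
    Finset.mem_singleton]

theorem powerGraph_degree_r {p z : ℕ} (hp : p.Prime) [NeZero (p ^ z)] {i : ZMod (p ^ z)}
    (hi : i ≠ 0) [Fintype ((powerGraph (DihedralGroup (p ^ z))).neighborSet (r i))] :
    (powerGraph (DihedralGroup (p ^ z))).degree (r i) = p ^ z - 1 := by
  rw [← SimpleGraph.card_neighborFinset_eq_degree]
  have : (powerGraph (DihedralGroup (p ^ z))).neighborFinset (r i) =
      (univ.erase i).image r := by
    ext x
    cases x with
    | r j => simp [powerGraph_adj_r_r_iff hp, eq_comm]
    | sr j => simp [powerGraph_adj_sr_iff, hi]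
  rw [this, card_image_of_injective _ fun _ _ => r.inj, card_erase_of_mem (mem_univ _),
    card_univ, ZMod.card]

theorem Aalpha_powerGraph_mulVec_r {p z : ℕ} (hp : p.Prime) [NeZero (p ^ z)] (α : ℝ)
    {i : ZMod (p ^ z)} (hi0 : i ≠ 0) (hi1 : i ≠ 1) :
    Aalpha (powerGraph (DihedralGroup (p ^ z))) α *ᵥ (Pi.single (r i) 1 - Pi.single (r 1) 1) =
      (α * ((p ^ z : ℕ) : ℝ) - 1) • (Pi.single (r i) 1 - Pi.single (r 1) 1) := by
  classical
  have h10 : (1 : ZMod (p ^ z)) ≠ 0 := fun h => hi0 (by rw [← mul_one i, h, mul_zero])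
  rw [Aalpha_mulVec_single_sub_single, powerGraph_degree_r hp hi0, SimpleGraph.adjMatrix_apply,
    if_pos ((powerGraph_adj_r_r_iff hp i 1).2 hi1), Nat.cast_sub NeZero.one_le]
  · congr 1
    push_cast
    ring
  · rw [powerGraph_degree_r hp hi0, powerGraph_degree_r hp h10]
  · intro w hwi hw1
    cases w with
    | r j => simp_all [powerGraph_adj_r_r_iff hp]
    | sr j =>
      rw [SimpleGraph.adj_comm, powerGraph_adj_sr_iff, SimpleGraph.adj_comm, powerGraph_adj_sr_iff]
      simp [hi0, h10]

theorem Aalpha_powerGraph_mulVec_sr [NeZero n] (α : ℝ) (i : ZMod n) :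
    Aalpha (powerGraph (DihedralGroup n)) α *ᵥ (Pi.single (sr i) 1 - Pi.single (sr 0) 1) =
      α • (Pi.single (sr i) 1 - Pi.single (sr 0) 1) := by
  classical
  rw [Aalpha_mulVec_single_sub_single, powerGraph_degree_sr, SimpleGraph.adjMatrix_apply,
    if_neg]
  · simp
  · rw [powerGraph_adj_sr_iff]
    exact sr_ne_one i
  · rw [powerGraph_degree_sr, powerGraph_degree_sr]
  · intro w _ _
    rw [powerGraph_adj_sr_iff, powerGraph_adj_sr_iff]

end DihedralGroup

open DihedralGroup in
theorem stmt_18_general {α : ℝ} (p z n : ℕ) (hp : p.Prime) (hn : n = p ^ z) [NeZero n] :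
    n - 2 ≤ eigMult (Aalpha (powerGraph (DihedralGroup n)) α) (α * (n : ℝ) - 1) ∧
    n - 1 ≤ eigMult (Aalpha (powerGraph (DihedralGroup n)) α) α := by
  subst hn
  constructor
  · calc p ^ z - 2 ≤ #((univ \ {0, 1}).image (r : ZMod (p ^ z) → _)) := by
          rw [card_image_of_injective _ fun _ _ => r.inj, card_univ_sdiff, ZMod.card]
          have := card_le_two (a := (0 : ZMod (p ^ z))) (b := 1)
          omega
      _ ≤ _ := by
          refine card_le_eigMult_of_mulVec_single_sub_single _ _ (b := r 1) (by simp) ?_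
          simp only [mem_image, mem_sdiff, mem_insert, mem_singleton, not_or]
          rintro _ ⟨i, ⟨-, hi0, hi1⟩, rfl⟩
          exact Aalpha_powerGraph_mulVec_r hp α hi0 hi1
  · calc p ^ z - 1 = #((univ.erase 0).image (sr : ZMod (p ^ z) → _)) := by
          rw [card_image_of_injective _ fun _ _ => sr.inj, card_erase_of_mem (mem_univ _),
            card_univ, ZMod.card]
      _ ≤ _ := by
          refine card_le_eigMult_of_mulVec_single_sub_single _ _ (b := sr 0) (by simp) ?_
          rintro _ hv
          obtain ⟨i, -, rfl⟩ := mem_image.1 hv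
          exact Aalpha_powerGraph_mulVec_sr α i

/-- eigenvalues of the power graph of the dihedral group `D_{2n}`
for `n = p^z` a prime power, `n ≥ 3`. -/
theorem stmt_18 {α : ℝ} (hα : α ∈ Set.Icc (0 : ℝ) 1)
    (p z n : ℕ) (hp : p.Prime) (hz : 1 ≤ z) (hn : n = p ^ z) (hn3 : 3 ≤ n) [NeZero n] :
    n - 2 ≤ eigMult (Aalpha (powerGraph (DihedralGroup n)) α) (α * (n : ℝ) - 1) ∧
    n - 1 ≤ eigMult (Aalpha (powerGraph (DihedralGroup n)) α) α :=
  stmt_18_general p z n hp hn
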